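/- If two compatible words x, y of equal length satisfy diff(x,y) = (u,v), then exactly one of u, v consists only of Σ-letters and the other only of Γ-letters (allowing either to be empty), and u, v are uniquely determined by x and y. -/

import Mathlib

open List

/-- A language is regular. -/
def IsReg {α : Type} (L : Set (List α)) : Prop := Language.IsRegular L

/-- Erase output letters: keep the Σ-part of a synchronization word. -/
def piIn {σ γ : Type} (w : List (σ ⊕ γ)) : List σ := w.filterMap Sum.getLeft?
/-- Erase input letters: keep the Γ-part of a synchronization word. -/
def piOut {σ γ : Type} (w : List (σ ⊕ γ)) : List γ := w.filterMap Sum.getRight?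
/-- `⟦w⟧`, the pair synchronized by `w`. -/
def syncPair {σ γ : Type} (w : List (σ ⊕ γ)) : List σ × List γ := (piIn w, piOut w)
/-- `⟦L⟧`, the relation defined by a synchronization language. -/
def syncRel {σ γ : Type} (L : Set (List (σ ⊕ γ))) : Set (List σ × List γ) := syncPair '' L

def rdom {σ γ : Type} (R : Set (List σ × List γ)) : Set (List σ) := {u | ∃ v, (u, v) ∈ R}

/-- A recognizable relation: a finite union of products of regular languages. -/
def Recognizable {σ γ : Type} (R : Set (List σ × List γ)) : Prop :=
  ∃ (n : ℕ) (U : Fin n → Set (List σ)) (V : Fin n → Set (List γ)),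
    (∀ i, IsReg (U i) ∧ IsReg (V i)) ∧
    R = ⋃ i, {p : List σ × List γ | p.1 ∈ U i ∧ p.2 ∈ V i}

/-- lag of the (1-based) position `i` of `w`. -/
def lagAt {σ γ : Type} (w : List (σ ⊕ γ)) (i : ℕ) : ℕ :=
  ((((w.take i).countP Sum.isLeft : ℕ) : ℤ) - (((w.take i).countP Sum.isRight : ℕ) : ℤ)).natAbs

/-- maximal lag of a position of `w`. -/
def lagW {σ γ : Type} (w : List (σ ⊕ γ)) : ℕ := (Finset.range (w.length + 1)).sup (lagAt w)

/-- number of shifts of `w`. -/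
def shiftCount {σ γ : Type} (w : List (σ ⊕ γ)) : ℕ :=
  (w.zip w.tail).countP fun p => p.1.isLeft != p.2.isLeft

/-- the (0-based) list of shift positions of `w`, in increasing order. -/
def shiftList {σ γ : Type} (w : List (σ ⊕ γ)) : List ℕ :=
  (List.range w.length).filter fun j =>
    decide (j + 1 < w.length) &&
      decide ((w[j]?).map Sum.isLeft ≠ (w[j + 1]?).map Sum.isLeft)

/-- shiftlag of `w`: the largest `n` such that `w` has `n` consecutive shifts that are all
`≥n`-lagged. -/
noncomputable def shiftlagW {σ γ : Type} (w : List (σ ⊕ γ)) : ℕ :=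
  sSup {n : ℕ | ∃ l : List ℕ, l <:+: shiftList w ∧ l.length = n ∧ ∀ j ∈ l, n ≤ lagAt w (j + 1)}

def FiniteShift {σ γ : Type} (L : Set (List (σ ⊕ γ))) : Prop := ∃ k, ∀ w ∈ L, shiftCount w ≤ k
def FiniteLag {σ γ : Type} (L : Set (List (σ ⊕ γ))) : Prop := ∃ k, ∀ w ∈ L, lagW w ≤ k
def FiniteShiftlag {σ γ : Type} (L : Set (List (σ ⊕ γ))) : Prop := ∃ k, ∀ w ∈ L, shiftlagW w ≤ k

/-- left quotient `u⁻¹L`. -/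
def leftQuot {α : Type} (u : List α) (L : Set (List α)) : Set (List α) := {z | u ++ z ∈ L}

/-- `w ⪯_T w'` : `w` is at most as synchronous as `w'` inside `T`. -/
def syncLe {σ γ : Type} (T : Set (List (σ ⊕ γ))) (w w' : List (σ ⊕ γ)) : Prop :=
  ∀ i : ℕ, FiniteShift (leftQuot (w'.take i) T) → FiniteShift (leftQuot (w.take i) T)

def allsync {σ γ : Type} (S T : Set (List (σ ⊕ γ))) : Set (List (σ ⊕ γ)) :=
  {w | w ∈ T ∧ syncPair w ∈ syncRel S}

def maxsync {σ γ : Type} (S T : Set (List (σ ⊕ γ))) : Set (List (σ ⊕ γ)) :=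
  {w | w ∈ T ∧ syncPair w ∈ syncRel S ∧
    ∀ w' ∈ T, syncPair w' = syncPair w → syncLe T w' w}

def minsync {σ γ : Type} (S T : Set (List (σ ⊕ γ))) : Set (List (σ ⊕ γ)) :=
  {w | w ∈ T ∧ syncPair w ∈ syncRel S ∧
    ∀ w' ∈ T, syncPair w' = syncPair w → syncLe T w w'}

/-- `Rel(T)`: relations definable by regular subsets of `T`. -/
def RelOf {σ γ : Type} (T : Set (List (σ ⊕ γ))) : Set (Set (List σ × List γ)) :=
  {R | ∃ T' : Set (List (σ ⊕ γ)), T' ⊆ T ∧ IsReg T' ∧ syncRel T' = R}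

/-- the canonical synchronization language `(ΣΓ)*(Σ* + Γ*)` of automatic relations. -/
def CanonAut (σ γ : Type) : Set (List (σ ⊕ γ)) :=
  {w | ∃ (p : List (σ × γ)) (x : List σ) (y : List γ),
    (x = [] ∨ y = []) ∧
    w = (p.flatMap fun ab => [Sum.inl ab.1, Sum.inr ab.2]) ++ x.map Sum.inl ++ y.map Sum.inr}

/-- the canonical synchronization language `Σ*Γ*` of recognizable relations. -/
def InOut (σ γ : Type) : Set (List (σ ⊕ γ)) :=
  {w | ∃ (x : List σ) (y : List γ), w = x.map Sum.inl ++ y.map Sum.inr}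

/-- An automatic relation: definable by a regular subset of `(ΣΓ)*(Σ* + Γ*)`. -/
def Automatic {σ γ : Type} (R : Set (List σ × List γ)) : Prop :=
  ∃ L : Set (List (σ ⊕ γ)), L ⊆ CanonAut σ γ ∧ IsReg L ∧ syncRel L = R

/-- `x` and `y` are compatible: equal length and extendable to a common pair. -/
def Compatible {σ γ : Type} (x y : List (σ ⊕ γ)) : Prop :=
  x.length = y.length ∧ ∃ u v : List (σ ⊕ γ), syncPair (x ++ u) = syncPair (y ++ v)

/-- `diff(x,y) = (u,v)`: `u,v` are the shortest words with `⟦xu⟧ = ⟦yv⟧`. -/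
def IsDiff {σ γ : Type} (x y u v : List (σ ⊕ γ)) : Prop :=
  syncPair (x ++ u) = syncPair (y ++ v) ∧
    ∀ u' v' : List (σ ⊕ γ), syncPair (x ++ u') = syncPair (y ++ v') →
      u.length ≤ u'.length ∧ v.length ≤ v'.length

/-!
Since `|x| = |y|`, whichever of `x, y` has read more input has produced less output: say
`π_i x = π_i y · s` and `π_o y = π_o x · t`. Then `(t, s)` (as Γ- resp. Σ-letters) is a
completion, and any completion `(u, v)` must contain `t` in `u` and `s` in `v`; by minimality
of lengths nothing else fits, so `diff(x, y) = (t, s)`.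
-/

section

variable {σ γ : Type}

lemma piIn_append (a b : List (σ ⊕ γ)) : piIn (a ++ b) = piIn a ++ piIn b :=
  filterMap_append ..

lemma piOut_append (a b : List (σ ⊕ γ)) : piOut (a ++ b) = piOut a ++ piOut b :=
  filterMap_append ..

@[simp]
lemma piIn_map_inl (s : List σ) : piIn (s.map Sum.inl : List (σ ⊕ γ)) = s := by
  simp [piIn, filterMap_map, Function.comp_def]

@[simp]
lemma piOut_map_inl (s : List σ) : piOut (s.map Sum.inl : List (σ ⊕ γ)) = [] := by
  simp [piOut, filterMap_map, Function.comp_def]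

@[simp]
lemma piIn_map_inr (t : List γ) : piIn (t.map Sum.inr : List (σ ⊕ γ)) = [] := by
  simp [piIn, filterMap_map, Function.comp_def]

@[simp]
lemma piOut_map_inr (t : List γ) : piOut (t.map Sum.inr : List (σ ⊕ γ)) = t := by
  simp [piOut, filterMap_map, Function.comp_def]

lemma length_piIn_add_length_piOut (w : List (σ ⊕ γ)) :
    (piIn w).length + (piOut w).length = w.length := by
  induction w with
  | nil => rfl
  | cons c w ih =>
    cases c <;> simp only [piIn, piOut, filterMap_cons] at ih ⊢ <;> simp <;> omega

lemma eq_map_inr_piOut_of_piIn_eq_nil {w : List (σ ⊕ γ)} (h : piIn w = []) :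
    w = (piOut w).map Sum.inr := by
  induction w with
  | nil => rfl
  | cons c w ih =>
    cases c with
    | inl a => simp [piIn] at h
    | inr b =>
      simp only [piIn, piOut, filterMap_cons, Sum.getLeft?_inr, Sum.getRight?_inr] at h ih ⊢
      simp [← ih h]

lemma eq_map_inl_piIn_of_piOut_eq_nil {w : List (σ ⊕ γ)} (h : piOut w = []) :
    w = (piIn w).map Sum.inl := by
  induction w with
  | nil => rfl
  | cons c w ih =>
    cases c with
    | inl a =>
      simp only [piIn, piOut, filterMap_cons, Sum.getLeft?_inl, Sum.getRight?_inl] at h ih ⊢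
      simp [← ih h]
    | inr b => simp [piOut] at h

lemma syncPair_eq_iff {a b : List (σ ⊕ γ)} :
    syncPair a = syncPair b ↔ piIn a = piIn b ∧ piOut a = piOut b :=
  Prod.ext_iff

lemma IsDiff.symm {x y u v : List (σ ⊕ γ)} (h : IsDiff x y u v) : IsDiff y x v u :=
  ⟨h.1.symm, fun u' v' h' => (h.2 v' u' h'.symm).symm⟩

lemma IsDiff.eq_map_of_piIn_eq_append {x y u v : List (σ ⊕ γ)} {s : List σ} {t : List γ}
    (hs : piIn x = piIn y ++ s) (ht : piOut y = piOut x ++ t) (hd : IsDiff x y u v) :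
    u = t.map Sum.inr ∧ v = s.map Sum.inl := by
  obtain ⟨hin, hout⟩ := syncPair_eq_iff.1 hd.1
  simp only [piIn_append, piOut_append, hs, ht, append_assoc] at hin hout
  have hv : piIn v = s ++ piIn u := (append_cancel_left hin).symm
  have hu : piOut u = t ++ piOut v := append_cancel_left hout
  have hcand : syncPair (x ++ t.map Sum.inr) = syncPair (y ++ s.map Sum.inl) := by
    simp [syncPair_eq_iff, piIn_append, piOut_append, hs, ht]
  obtain ⟨hul, hvl⟩ := hd.2 _ _ hcand
  have hu_len := length_piIn_add_length_piOut u
  have hv_len := length_piIn_add_length_piOut v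
  have hu_len' := congrArg length hu
  have hv_len' := congrArg length hv
  simp only [length_map, length_append] at hul hvl hu_len' hv_len'
  have hu_in : piIn u = [] := eq_nil_of_length_eq_zero (by omega)
  have hv_out : piOut v = [] := eq_nil_of_length_eq_zero (by omega)
  constructor
  · rw [eq_map_inr_piOut_of_piIn_eq_nil hu_in, hu, hv_out, append_nil]
  · rw [eq_map_inl_piIn_of_piOut_eq_nil hv_out, hv, hu_in, append_nil]

lemma exists_piIn_eq_append_of_syncPair_append_eq {x y u v : List (σ ⊕ γ)}
    (hlen : x.length = y.length) (h : syncPair (x ++ u) = syncPair (y ++ v))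
    (hle : (piIn y).length ≤ (piIn x).length) :
    ∃ s t, piIn x = piIn y ++ s ∧ piOut y = piOut x ++ t := by
  obtain ⟨hin, hout⟩ := syncPair_eq_iff.1 h
  rw [piIn_append, piIn_append] at hin
  rw [piOut_append, piOut_append] at hout
  have hlen' : (piOut x).length ≤ (piOut y).length := by
    have := length_piIn_add_length_piOut x
    have := length_piIn_add_length_piOut y
    omega
  have hy_in : piIn y <+: piIn x ++ piIn u := hin ▸ prefix_append _ _
  have hy_out : piOut y <+: piOut x ++ piOut u := hout ▸ prefix_append _ _
  obtain ⟨s, hs⟩ := prefix_of_prefix_length_le hy_in (prefix_append _ _) hle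
  obtain ⟨t, ht⟩ := prefix_of_prefix_length_le (prefix_append _ _) hy_out hlen'
  exact ⟨s, t, hs.symm, ht.symm⟩

end

theorem stmt14_general {σ γ : Type} (x y u v : List (σ ⊕ γ))
    (hlen : x.length = y.length) (hd : IsDiff x y u v) :
    (((∀ c ∈ u, c.isLeft = true) ∧ (∀ c ∈ v, c.isRight = true)) ∨
     ((∀ c ∈ u, c.isRight = true) ∧ (∀ c ∈ v, c.isLeft = true))) ∧
    (∀ u' v', IsDiff x y u' v' → u' = u ∧ v' = v) := by
  rcases le_total (piIn y).length (piIn x).length with hle | hle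
  · obtain ⟨s, t, hs, ht⟩ := exists_piIn_eq_append_of_syncPair_append_eq hlen hd.1 hle
    obtain ⟨rfl, rfl⟩ := hd.eq_map_of_piIn_eq_append hs ht
    exact ⟨Or.inr ⟨by simp, by simp⟩, fun u' v' hd' => hd'.eq_map_of_piIn_eq_append hs ht⟩
  · obtain ⟨s, t, hs, ht⟩ :=
      exists_piIn_eq_append_of_syncPair_append_eq hlen.symm hd.1.symm hle
    obtain ⟨rfl, rfl⟩ := hd.symm.eq_map_of_piIn_eq_append hs ht
    refine ⟨Or.inl ⟨by simp, by simp⟩, fun u' v' hd' => ?_⟩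
    exact (hd'.symm.eq_map_of_piIn_eq_append hs ht).symm

/-- if compatible words `x, y` of equal length satisfy `diff(x,y) = (u,v)`,
then one of `u, v` consists only of Σ-letters and the other only of Γ-letters (either may be
empty), and `u, v` are uniquely determined by `x` and `y`. -/
theorem stmt14 {σ γ : Type} (x y u v : List (σ ⊕ γ))
    (hlen : x.length = y.length) (hc : Compatible x y) (hd : IsDiff x y u v) :
    (((∀ c ∈ u, c.isLeft = true) ∧ (∀ c ∈ v, c.isRight = true)) ∨
     ((∀ c ∈ u, c.isRight = true) ∧ (∀ c ∈ v, c.isLeft = true))) ∧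
    (∀ u' v', IsDiff x y u' v' → u' = u ∧ v' = v) :=
  stmt14_general x y u v hlen hd
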